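/- arXiv:1904.12853 — 2 statements merged into one kernel-verified Lean document; each statement's English description precedes it below -/
import Mathlib

section
/- Let w be a weight structure on a triangulated category C, and let m' < m ≤ n be integers. If g : M → N kills weights m,…,n and h : N → O kills weights m',…,m−1, then the composite h∘g kills weights m',…,n. -/
open CategoryTheory Limits Pretriangulated

structure WeightStructure (C : Type*) [Category C] [Preadditive C] [HasZeroObject C]
    [HasShift C ℤ] [∀ n : ℤ, (CategoryTheory.shiftFunctor C n).Additive] [Pretriangulated C] where
  le : Set C
  ge : Set C
  le_retract : ∀ ⦃X Y : C⦄, Y ∈ le → ∀ (i : X ⟶ Y) (r : Y ⟶ X), i ≫ r = 𝟙 X → X ∈ le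
  ge_retract : ∀ ⦃X Y : C⦄, Y ∈ ge → ∀ (i : X ⟶ Y) (r : Y ⟶ X), i ≫ r = 𝟙 X → X ∈ ge
  le_shift : ∀ ⦃X : C⦄, X ∈ le → X⟦(-1 : ℤ)⟧ ∈ le
  ge_shift : ∀ ⦃X : C⦄, X ∈ ge → X⟦(1 : ℤ)⟧ ∈ ge
  orth : ∀ ⦃X Y : C⦄, X ∈ le → Y ∈ ge → ∀ f : X ⟶ Y⟦(1 : ℤ)⟧, f = 0
  decomp : ∀ M : C, ∃ (L R : C) (f : L ⟶ M) (g : M ⟶ R) (δ : R ⟶ L⟦(1 : ℤ)⟧),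
    (Triangle.mk f g δ ∈ distTriang C) ∧ L ∈ le ∧ R⟦(-1 : ℤ)⟧ ∈ ge

namespace WeightStructure

variable {C : Type*} [Category C] [Preadditive C] [HasZeroObject C]
  [HasShift C ℤ] [∀ n : ℤ, (CategoryTheory.shiftFunctor C n).Additive] [Pretriangulated C]
  (w : WeightStructure C)

/-- The class `C_{w ≤ n} = C_{w≤0}[n]`. -/
def Le (n : ℤ) : Set C := {X | X⟦(-n)⟧ ∈ w.le}

/-- The class `C_{w ≥ n} = C_{w≥0}[n]`. -/
def Ge (n : ℤ) : Set C := {X | X⟦(-n)⟧ ∈ w.ge}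

/-- `f, g, δ` form a `k`-weight decomposition triangle of `M`. -/
def IsWeightDecomp (k : ℤ) {A M B : C} (f : A ⟶ M) (g : M ⟶ B) (δ : B ⟶ A⟦(1 : ℤ)⟧) : Prop :=
  (Triangle.mk f g δ ∈ distTriang C) ∧ A ∈ w.Le k ∧ B ∈ w.Ge (k + 1)

/-- `g : M ⟶ N` kills weights `m,…,n`. -/
def KillsWeights (m n : ℤ) {M N : C} (g : M ⟶ N) : Prop :=
  ∃ (A B A' B' : C) (a : A ⟶ M) (b : M ⟶ B) (δ : B ⟶ A⟦(1 : ℤ)⟧)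
    (a' : A' ⟶ N) (b' : N ⟶ B') (δ' : B' ⟶ A'⟦(1 : ℤ)⟧),
    w.IsWeightDecomp n a b δ ∧ w.IsWeightDecomp (m - 1) a' b' δ' ∧ a ≫ g ≫ b' = 0

/-- `M` is without weights `m,…,n`. -/
def WithoutWeights (m n : ℤ) (M : C) : Prop := w.KillsWeights m n (𝟙 M)

end WeightStructure

/-!
Factor `w_{≤n}M → M → N` through `w_{≤m-1}N → N`, and `N → O → w_{≥m'}O` through
`N → w_{≥m}N`. The composite then passes through `w_{≤m-1}N → N → w_{≥m}N`, which vanishes by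
orthogonality: it goes from the first half of an `(m-1)`-weight decomposition of `N` to the
second half of another one.
-/

namespace WeightStructure

variable {C : Type*} [Category C] [Preadditive C] [HasZeroObject C]
  [HasShift C ℤ] [∀ n : ℤ, (CategoryTheory.shiftFunctor C n).Additive] [Pretriangulated C]
  (w : WeightStructure C)

lemma hom_eq_zero_of_mem_Le_of_mem_Ge {k : ℤ} {X Y : C} (hX : X ∈ w.Le k)
    (hY : Y ∈ w.Ge (k + 1)) (f : X ⟶ Y) : f = 0 := by
  let e := (shiftFunctorAdd' C (-(k + 1)) 1 (-k) (by omega)).app Y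
  have hshift : (shiftFunctor C (-k)).map f ≫ e.hom = 0 := w.orth hX hY _
  rwa [Preadditive.IsIso.comp_right_eq_zero, Functor.map_eq_zero_iff] at hshift

variable {w}

namespace IsWeightDecomp

variable {k : ℤ} {A M B : C} {a : A ⟶ M} {b : M ⟶ B} {δ : B ⟶ A⟦(1 : ℤ)⟧}

lemma comp_eq_zero (hd : w.IsWeightDecomp k a b δ) {A' B' : C} {a' : A' ⟶ M} {b' : M ⟶ B'}
    {δ' : B' ⟶ A'⟦(1 : ℤ)⟧} (hd' : w.IsWeightDecomp k a' b' δ') : a ≫ b' = 0 :=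
  w.hom_eq_zero_of_mem_Le_of_mem_Ge hd.2.1 hd'.2.2 _

lemma exists_lift (hd : w.IsWeightDecomp k a b δ) {X : C} (f : X ⟶ M) (hf : f ≫ b = 0) :
    ∃ φ : X ⟶ A, f = φ ≫ a :=
  Triangle.coyoneda_exact₂ _ hd.1 f hf

lemma exists_desc (hd : w.IsWeightDecomp k a b δ) {Y : C} (f : M ⟶ Y) (hf : a ≫ f = 0) :
    ∃ ψ : B ⟶ Y, f = b ≫ ψ :=
  Triangle.yoneda_exact₂ _ hd.1 f hf

end IsWeightDecomp

end WeightStructure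

/-- composing morphisms killing adjacent weight ranges kills the union range. -/
theorem killsWeights_comp {C : Type*} [Category C] [Preadditive C] [HasZeroObject C]
    [HasShift C ℤ] [∀ n : ℤ, (CategoryTheory.shiftFunctor C n).Additive] [Pretriangulated C]
    (w : WeightStructure C) (m' m n : ℤ) (h1 : m' < m) (h2 : m ≤ n)
    {M N O : C} (g : M ⟶ N) (h : N ⟶ O)
    (hg : w.KillsWeights m n g) (hh : w.KillsWeights m' (m - 1) h) :
    w.KillsWeights m' n (g ≫ h) := by
  obtain ⟨A, B, _, _, a, b, δ, a', _, _, hdM, hdN, hg⟩ := hg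
  obtain ⟨_, _, A₂', B₂', _, b₂, _, a₂', b₂', δ₂', hdN₂, hdO, hh⟩ := hh
  obtain ⟨φ, hφ⟩ := hdN.exists_lift (a ≫ g) (by rwa [Category.assoc])
  obtain ⟨ψ, hψ⟩ := hdN₂.exists_desc (h ≫ b₂') hh
  refine ⟨A, B, A₂', B₂', a, b, δ, a₂', b₂', δ₂', hdM, hdO, ?_⟩
  calc a ≫ (g ≫ h) ≫ b₂' = (a ≫ g) ≫ h ≫ b₂' := by simp only [Category.assoc]
    _ = φ ≫ (a' ≫ b₂) ≫ ψ := by rw [hφ, hψ]; simp only [Category.assoc]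
    _ = 0 := by rw [hdN.comp_eq_zero hdN₂, zero_comp, comp_zero]
end

section
/- Let w be a weight structure on a triangulated category C whose heart Hw is idempotent complete (C is weight-Karoubian). If an object O of C is without weights m,…,n (for m ≤ n integers), then there exists a distinguished triangle X → O → Y → X[1] with X ∈ C_{w≤m-1} and Y ∈ C_{w≥n+1}. -/
open CategoryTheory Limits Pretriangulated

/-- The heart of `w` is idempotent complete: every idempotent endomorphism of an object of
`C_{w=0}` splits through an object of `C_{w=0}`. -/
def WeightStructure.WeightKaroubian {C : Type*} [Category C] [Preadditive C] [HasZeroObject C]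
    [HasShift C ℤ] [∀ n : ℤ, (CategoryTheory.shiftFunctor C n).Additive] [Pretriangulated C]
    (w : WeightStructure C) : Prop :=
  ∀ X : C, X ∈ w.Le 0 ∩ w.Ge 0 → ∀ e : X ⟶ X, e ≫ e = e →
    ∃ (Y : C) (_ : Y ∈ w.Le 0 ∩ w.Ge 0) (i : Y ⟶ X) (p : X ⟶ Y),
      i ≫ p = 𝟙 Y ∧ p ≫ i = e

/-!
Let `A → O → B` be the `n`-weight decomposition of `O` and `A' → O → B'` its `(m-1)`-weight
decomposition. As `id_O` kills weights `m,…,n`, the map `a : A → O` factors as `c ≫ a'`, and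
orthogonality makes `a'` factor as `d ≫ a`; so `t = c ≫ d` is an endomorphism of `A`, passing
through `A' ∈ C_{w≤m-1}`, with `t ≫ a = a`. Since `(1 - t) ≫ a = 0`, the endomorphism `1 - t`
factors through the top weight piece `q : A → H` of `A`, where `H ∈ C_{w=n}`, and `t ≫ q = 0`.
Hence `1 - t` is an idempotent passing through `H`; it splits because `Hw` is idempotent
complete, so `t` splits as well. Its image `X` is a retract of `A'`, and since `a` factors
through `X`, the cone of `X → O` is a retract of `B`.
-/

namespace CategoryTheory.Pretriangulated

variable {C : Type*} [Category C] [Preadditive C] [HasZeroObject C] [HasShift C ℤ]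
  [∀ n : ℤ, (shiftFunctor C n).Additive] [Pretriangulated C]

lemma distTriang_of_iso_obj₂ {T : Triangle C} (hT : T ∈ distTriang C) {M : C} (e : T.obj₂ ≅ M) :
    Triangle.mk (T.mor₁ ≫ e.hom) (e.inv ≫ T.mor₂) T.mor₃ ∈ distTriang C := by
  refine isomorphic_distinguished _ hT _
    (Triangle.isoMk _ _ (Iso.refl _) e.symm (Iso.refl _) ?_ ?_ ?_)
  · change (T.mor₁ ≫ e.hom) ≫ e.inv = 𝟙 _ ≫ T.mor₁
    simp
  · change (e.inv ≫ T.mor₂) ≫ 𝟙 _ = e.inv ≫ T.mor₂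
    simp
  · change T.mor₃ ≫ (𝟙 T.obj₁)⟦(1 : ℤ)⟧' = 𝟙 _ ≫ T.mor₃
    simp

lemma exists_split_one_sub {H A : C} (i : H ⟶ A) (r : A ⟶ H) (hir : i ≫ r = 𝟙 H) :
    ∃ (X : C) (σ : X ⟶ A) (π : A ⟶ X), σ ≫ π = 𝟙 X ∧ π ≫ σ = 𝟙 A - r ≫ i := by
  obtain ⟨X, π, δ, hT⟩ := distinguished_cocone_triangle i
  have hδ : δ = 0 := by
    have hδi : δ ≫ i⟦(1 : ℤ)⟧' = 0 := comp_distTriang_mor_zero₃₁ _ hT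
    calc δ = δ ≫ (i ≫ r)⟦(1 : ℤ)⟧' := by rw [hir, Functor.map_id, Category.comp_id]
      _ = 0 := by rw [Functor.map_comp, ← Category.assoc, hδi, zero_comp]
  obtain ⟨ρ, hρ⟩ : ∃ ρ : X ⟶ A, 𝟙 X = ρ ≫ π :=
    Triangle.coyoneda_exact₃ _ hT (𝟙 X) ((Category.id_comp δ).trans hδ)
  have hi : i ≫ (𝟙 A - r ≫ i) = 0 := by
    rw [Preadditive.comp_sub, Category.comp_id, reassoc_of% hir, sub_self]
  obtain ⟨σ, hσ⟩ : ∃ σ : X ⟶ A, 𝟙 A - r ≫ i = π ≫ σ := Triangle.yoneda_exact₂ _ hT _ hi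
  have hiπ : i ≫ π = 0 := comp_distTriang_mor_zero₁₂ _ hT
  refine ⟨X, σ, π, ?_, hσ.symm⟩
  calc σ ≫ π = (ρ ≫ π) ≫ σ ≫ π := by rw [← hρ, Category.id_comp]
    _ = ρ ≫ (π ≫ σ) ≫ π := by simp only [Category.assoc]
    _ = 𝟙 X := by
      rw [← hσ, Preadditive.sub_comp, Category.id_comp, Category.assoc, hiπ, comp_zero,
        sub_zero, hρ]

lemma exists_split_of_one_sub_factors {A H : C}
    (hH : ∀ ε : H ⟶ H, ε ≫ ε = ε →
      ∃ (H₀ : C) (i : H₀ ⟶ H) (p : H ⟶ H₀), i ≫ p = 𝟙 H₀ ∧ p ≫ i = ε)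
    {t : A ⟶ A} {q : A ⟶ H} {γ : H ⟶ A} (hqγ : q ≫ γ = 𝟙 A - t) (htq : t ≫ q = 0) :
    ∃ (X : C) (σ : X ⟶ A) (π : A ⟶ X), σ ≫ π = 𝟙 X ∧ π ≫ σ = t := by
  have hqγq : q ≫ γ ≫ q = q := by
    rw [← Category.assoc, hqγ, Preadditive.sub_comp, Category.id_comp, htq, sub_zero]
  obtain ⟨H₀, i, p, hip, hpi⟩ := hH (γ ≫ q) (by simp only [Category.assoc, hqγq])
  have hsplit : (i ≫ γ) ≫ q ≫ p = 𝟙 H₀ := by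
    simp only [Category.assoc]
    rw [← Category.assoc γ, ← hpi]
    simp [hip]
  obtain ⟨X, σ, π, hσπ, hπσ⟩ := exists_split_one_sub _ _ hsplit
  refine ⟨X, σ, π, hσπ, ?_⟩
  have : (q ≫ p) ≫ i ≫ γ = 𝟙 A - t := by
    rw [Category.assoc, reassoc_of% hpi, reassoc_of% hqγq, hqγ]
  rw [hπσ, this, sub_sub_cancel]

lemma nonempty_retract_obj₃ {T T' : Triangle C} (hT : T ∈ distTriang C)
    (hT' : T' ∈ distTriang C) (e₁ : Retract T.obj₁ T'.obj₁) (e₂ : Retract T.obj₂ T'.obj₂)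
    (hi : T.mor₁ ≫ e₂.i = e₁.i ≫ T'.mor₁) (hr : T'.mor₁ ≫ e₂.r = e₁.r ≫ T.mor₁) :
    Nonempty (Retract T.obj₃ T'.obj₃) := by
  obtain ⟨i₃, hi₂, hi₃⟩ := complete_distinguished_triangle_morphism T T' hT hT' e₁.i e₂.i hi
  obtain ⟨r₃, hr₂, hr₃⟩ := complete_distinguished_triangle_morphism T' T hT' hT e₁.r e₂.r hr
  let φ : T ⟶ T := Triangle.homMk _ _ (e₁.i ≫ e₁.r) (e₂.i ≫ e₂.r) (i₃ ≫ r₃)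
    (by rw [reassoc_of% hi, hr, Category.assoc])
    (by rw [reassoc_of% hi₂, hr₂, Category.assoc])
    (by rw [Functor.map_comp, reassoc_of% hi₃, hr₃, Category.assoc])
  have : IsIso φ.hom₃ := isIso₃_of_isIso₁₂ φ hT hT
    (by rw [show φ.hom₁ = 𝟙 _ from e₁.retract]; infer_instance)
    (by rw [show φ.hom₂ = 𝟙 _ from e₂.retract]; infer_instance)
  exact ⟨⟨i₃, r₃ ≫ inv φ.hom₃, by rw [← Category.assoc]; exact IsIso.hom_inv_id φ.hom₃⟩⟩

end CategoryTheory.Pretriangulated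

namespace WeightStructure

variable {C : Type*} [Category C] [Preadditive C] [HasZeroObject C] [HasShift C ℤ]
  [∀ n : ℤ, (shiftFunctor C n).Additive] [Pretriangulated C] (w : WeightStructure C)

lemma mem_Le_of_retract {k : ℤ} {X Y : C} (e : Retract X Y) (hY : Y ∈ w.Le k) : X ∈ w.Le k :=
  w.le_retract hY (e.map _).i (e.map _).r (e.map _).retract

lemma mem_Ge_of_retract {k : ℤ} {X Y : C} (e : Retract X Y) (hY : Y ∈ w.Ge k) : X ∈ w.Ge k :=
  w.ge_retract hY (e.map _).i (e.map _).r (e.map _).retract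

lemma shift_mem_Le {a : ℤ} (b : ℤ) {X : C} (hX : X ∈ w.Le a) : X⟦b⟧ ∈ w.Le (a + b) :=
  let e := (shiftFunctorAdd' C b (-(a + b)) (-a) (by ring)).app X
  w.le_retract hX e.inv e.hom e.inv_hom_id

lemma shift_mem_Ge {a : ℤ} (b : ℤ) {X : C} (hX : X ∈ w.Ge a) : X⟦b⟧ ∈ w.Ge (a + b) :=
  let e := (shiftFunctorAdd' C b (-(a + b)) (-a) (by ring)).app X
  w.ge_retract hX e.inv e.hom e.inv_hom_id

lemma antitone_Ge : Antitone w.Ge :=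
  antitone_int_of_succ_le fun k X hX =>
    let e := (shiftFunctorAdd' C (-(k + 1)) 1 (-k) (by ring)).app X
    w.ge_retract (w.ge_shift hX) e.hom e.inv e.hom_inv_id

lemma hom_eq_zero_of_lt {a b : ℤ} (hab : a < b) {X Y : C} (hX : X ∈ w.Le a) (hY : Y ∈ w.Ge b)
    (f : X ⟶ Y) : f = 0 := by
  have hY' : Y ∈ w.Ge (a + 1) := w.antitone_Ge (by omega) hY
  let e := (shiftFunctorAdd' C (-(a + 1)) 1 (-a) (by ring)).app Y
  apply (shiftFunctor C (-a)).map_injective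
  rw [Functor.map_zero, ← cancel_mono e.hom, zero_comp]
  exact w.orth hX hY' _

lemma exists_isWeightDecomp (k : ℤ) (M : C) :
    ∃ (L R : C) (f : L ⟶ M) (g : M ⟶ R) (δ : R ⟶ L⟦(1 : ℤ)⟧), w.IsWeightDecomp k f g δ := by
  obtain ⟨L, R, f, g, δ, hT, hL, hR⟩ := w.decomp (M⟦-k⟧)
  have hL' : L ∈ w.Le 0 :=
    let e := (shiftFunctorZero' C (-0 : ℤ) neg_zero).app L
    w.le_retract hL e.hom e.inv e.hom_inv_id
  have hR' : R ∈ w.Ge 1 := hR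
  exact ⟨_, _, _, _, _, distTriang_of_iso_obj₂ (Triangle.shift_distinguished _ hT k)
      ((shiftFunctorCompIsoId C (-k) k (by omega)).app M),
    by simpa using w.shift_mem_Le k hL', by simpa [add_comm] using w.shift_mem_Ge k hR'⟩

lemma mem_Le_of_forall_hom_eq_zero (k : ℤ) {X : C}
    (h : ∀ Z ∈ w.Ge (k + 1), ∀ φ : X ⟶ Z, φ = 0) : X ∈ w.Le k := by
  obtain ⟨L, R, f, g, δ, hT, hL, hR⟩ := w.exists_isWeightDecomp k X
  obtain ⟨s, hs⟩ := Triangle.coyoneda_exact₂ _ hT (𝟙 X) ((Category.id_comp g).trans (h R hR g))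
  exact w.mem_Le_of_retract ⟨s, f, hs.symm⟩ hL

lemma mem_Le_of_distTriang {k : ℤ} {A₁ A H : C} {p : A₁ ⟶ A} {q : A ⟶ H}
    {r : H ⟶ A₁⟦(1 : ℤ)⟧} (hT : Triangle.mk p q r ∈ distTriang C) (hA₁ : A₁ ∈ w.Le (k - 1))
    (hA : A ∈ w.Le k) : H ∈ w.Le k := by
  refine w.mem_Le_of_forall_hom_eq_zero k fun Z hZ φ => ?_
  obtain ⟨ω, hω⟩ : ∃ ω : A₁⟦(1 : ℤ)⟧ ⟶ Z, φ = r ≫ ω :=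
    Triangle.yoneda_exact₃ _ hT φ (w.hom_eq_zero_of_lt (by omega) hA hZ _)
  rw [hω, w.hom_eq_zero_of_lt (by omega) (w.shift_mem_Le 1 hA₁) hZ ω, comp_zero]

lemma exists_comp_eq_of_comp_eq_zero {k : ℤ} {A O B A₁ A₂ H : C} {a : A ⟶ O} {b : O ⟶ B}
    {δ : B ⟶ A⟦(1 : ℤ)⟧} (hT : Triangle.mk a b δ ∈ distTriang C) (hB : B ∈ w.Ge (k + 1))
    {p : A₁ ⟶ A₂} {q : A₂ ⟶ H} {r : H ⟶ A₁⟦(1 : ℤ)⟧} (hT₁ : Triangle.mk p q r ∈ distTriang C)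
    (hA₁ : A₁ ∈ w.Le (k - 1)) (f : A₂ ⟶ A) (hf : f ≫ a = 0) : ∃ γ : H ⟶ A, q ≫ γ = f := by
  obtain ⟨u, rfl⟩ := Triangle.coyoneda_exact₂ _ (inv_rot_of_distTriang _ hT) f hf
  obtain ⟨ν, rfl⟩ := Triangle.yoneda_exact₂ _ hT₁ u
    (w.hom_eq_zero_of_lt (by omega) hA₁ (w.shift_mem_Ge (-1) hB) _)
  exact ⟨ν ≫ _, (Category.assoc _ _ _).symm⟩

lemma WeightKaroubian.exists_split {w : WeightStructure C} (hkar : w.WeightKaroubian) {k : ℤ}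
    {H : C} (hle : H ∈ w.Le k) (hge : H ∈ w.Ge k) (ε : H ⟶ H) (hε : ε ≫ ε = ε) :
    ∃ (H₀ : C) (i : H₀ ⟶ H) (p : H ⟶ H₀), i ≫ p = 𝟙 H₀ ∧ p ≫ i = ε := by
  obtain ⟨Y, -, i, p, hip, hpi⟩ := hkar (H⟦-k⟧)
    ⟨by simpa using w.shift_mem_Le (-k) hle, by simpa using w.shift_mem_Ge (-k) hge⟩
    (ε⟦-k⟧') (by rw [← Functor.map_comp, hε])
  let e := (shiftFunctorCompIsoId C (-k) k (by omega)).app H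
  refine ⟨Y⟦k⟧, i⟦k⟧' ≫ e.hom, e.inv ≫ p⟦k⟧', ?_, ?_⟩
  · rw [Category.assoc, e.hom_inv_id_assoc, ← Functor.map_comp, hip, (shiftFunctor C k).map_id]
  · have hε' : ε⟦-k⟧'⟦k⟧' ≫ e.hom = e.hom ≫ ε :=
      (shiftFunctorCompIsoId C (-k) k (by omega)).hom.naturality ε
    rw [Category.assoc, ← Functor.map_comp_assoc, hpi, hε', e.inv_hom_id_assoc]

end WeightStructure

/-- in a weight-Karoubian category, an object without weights `m,…,n`
admits a decomposition avoiding these weights. -/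
theorem exists_decomposition_avoiding_weights {C : Type*} [Category C] [Preadditive C]
    [HasZeroObject C] [HasShift C ℤ] [∀ n : ℤ, (CategoryTheory.shiftFunctor C n).Additive]
    [Pretriangulated C] (w : WeightStructure C) (hkar : w.WeightKaroubian)
    (m n : ℤ) (hmn : m ≤ n) (O : C) (hO : w.WithoutWeights m n O) :
    ∃ (X Y : C) (a : X ⟶ O) (b : O ⟶ Y) (δ : Y ⟶ X⟦(1 : ℤ)⟧),
      (Triangle.mk a b δ ∈ distTriang C) ∧ X ∈ w.Le (m - 1) ∧ Y ∈ w.Ge (n + 1) := by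
  obtain ⟨A, B, A', B', a, b, δ, a', b', δ', ⟨hT, hA, hB⟩, ⟨hT', hA', -⟩, hab'⟩ := hO
  have hab : a ≫ b' = 0 := by simpa using hab'
  obtain ⟨c, hc⟩ : ∃ c : A ⟶ A', a = c ≫ a' := Triangle.coyoneda_exact₂ _ hT' a hab
  obtain ⟨d, hd⟩ : ∃ d : A' ⟶ A, a' = d ≫ a :=
    Triangle.coyoneda_exact₂ _ hT a' (w.hom_eq_zero_of_lt (by omega) hA' hB _)
  have hcda : (c ≫ d) ≫ a = a := by rw [Category.assoc, ← hd, ← hc]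
  obtain ⟨A₁, H, p, q, r, hT₁, hA₁, hH⟩ := w.exists_isWeightDecomp (n - 1) A
  rw [sub_add_cancel] at hH
  obtain ⟨γ, hγ⟩ := w.exists_comp_eq_of_comp_eq_zero hT hB hT₁ hA₁ (𝟙 A - c ≫ d)
    (by rw [Preadditive.sub_comp, hcda, Category.id_comp, sub_self])
  have hcdq : (c ≫ d) ≫ q = 0 := by
    rw [Category.assoc, w.hom_eq_zero_of_lt (by omega) hA' hH (d ≫ q), comp_zero]
  obtain ⟨X, σ, π, hσπ, hπσ⟩ :=
    exists_split_of_one_sub_factors (hkar.exists_split (w.mem_Le_of_distTriang hT₁ hA₁ hA) hH)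
      hγ hcdq
  obtain ⟨Y, g, δ₁, hTY⟩ := distinguished_cocone_triangle (σ ≫ a)
  have hσcd : σ ≫ c ≫ d = σ := by rw [← hπσ, reassoc_of% hσπ]
  have hX : Retract X A' := ⟨σ ≫ c, d ≫ π, by rw [Category.assoc, reassoc_of% hσcd, hσπ]⟩
  have hπσa : a ≫ 𝟙 O = π ≫ σ ≫ a := by
    rw [Category.comp_id, reassoc_of% hπσ, ← Category.assoc, hcda]
  obtain ⟨hY⟩ := nonempty_retract_obj₃ hTY hT ⟨σ, π, hσπ⟩ (Retract.refl O)
    (Category.comp_id (σ ≫ a)) hπσa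
  exact ⟨X, Y, σ ≫ a, g, δ₁, hTY, w.mem_Le_of_retract hX hA', w.mem_Ge_of_retract hY hB⟩
end
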